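/- For any balanced defining set (S₁,…,S_{2t}) of {1,…,4t} and any allowed swap collection I, the total discrepancy after applying the swaps of I has the same parity as 0 modulo 2; i.e., Σ_{i=1}^{t} |Σ(S'_{2i−1}) − Σ(S'_{2i})| is an even integer. -/

import Mathlib

/-!
Only parities matter, and `|a - b| ≡ a + b (mod 2)`, so the total discrepancy has the parity of the
sum of all swapped elements. A collection of disjoint adjacent swaps inside `{1, …, 4t}` permutes
that set, so this sum is `1 + ⋯ + 4t = 2t(4t + 1)`, which is even.
-/

/-- Applying the collection of adjacent swaps with left endpoints in `I`. -/
def swapFun (I : Finset ℕ) (x : ℕ) : ℕ :=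
  if x ∈ I then x + 1 else if x - 1 ∈ I ∧ 1 ≤ x then x - 1 else x

open Finset

lemma swapFun_involutive {I : Finset ℕ}
    (hIdist : ∀ i ∈ I, ∀ j ∈ I, i ≠ j → i + 1 ≠ j ∧ j + 1 ≠ i) :
    Function.Involutive (swapFun I) := by
  intro x
  unfold swapFun
  by_cases hx : x ∈ I
  · have hx1 : x + 1 ∉ I := fun h => (hIdist x hx (x + 1) h (by omega)).1 rfl
    rw [if_pos hx, if_neg hx1, if_pos ⟨by simpa using hx, by omega⟩]
    omega
  · by_cases hx1 : x - 1 ∈ I ∧ 1 ≤ x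
    · rw [if_neg hx, if_pos hx1, if_pos hx1.1]
      omega
    · rw [if_neg hx, if_neg hx1, if_neg hx, if_neg hx1]

lemma swapFun_mem_Icc {I : Finset ℕ} {n : ℕ} (hIrange : ∀ i ∈ I, 1 ≤ i ∧ i < n) {x : ℕ}
    (hx : x ∈ Icc 1 n) : swapFun I x ∈ Icc 1 n := by
  rw [mem_Icc] at hx ⊢
  unfold swapFun
  split_ifs with h₁ h₂
  · have := hIrange x h₁; omega
  · have := hIrange _ h₂.1; omega
  · exact hx

lemma sum_Icc_comp_swapFun {M : Type*} [AddCommMonoid M] {I : Finset ℕ} {n : ℕ}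
    (hIrange : ∀ i ∈ I, 1 ≤ i ∧ i < n)
    (hIdist : ∀ i ∈ I, ∀ j ∈ I, i ≠ j → i + 1 ≠ j ∧ j + 1 ≠ i) (f : ℕ → M) :
    ∑ x ∈ Icc 1 n, f (swapFun I x) = ∑ x ∈ Icc 1 n, f x :=
  sum_nbij' (swapFun I) (swapFun I) (fun _ => swapFun_mem_Icc hIrange)
    (fun _ => swapFun_mem_Icc hIrange) (fun x _ => swapFun_involutive hIdist x)
    (fun x _ => swapFun_involutive hIdist x) (fun _ _ => rfl)

lemma even_sum_abs_sub_iff (u : ℕ → ℤ) (t : ℕ) :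
    Even (∑ i ∈ range t, |u (2 * i) - u (2 * i + 1)|) ↔ Even (∑ j ∈ range (2 * t), u j) := by
  induction t with
  | zero => simp
  | succ t ih =>
    rw [sum_range_succ, show 2 * (t + 1) = 2 * t + 1 + 1 by ring, sum_range_succ, sum_range_succ,
      add_assoc, Int.even_add, Int.even_add, ih, even_abs, Int.even_sub, Int.even_add]

lemma even_sum_Icc_one_four_mul (t : ℕ) : Even (∑ x ∈ Icc 1 (4 * t), x) := by
  have hIcc : ∑ x ∈ Icc 1 (4 * t), x = ∑ x ∈ range (4 * t + 1), x := by
    rw [range_eq_Ico, sum_eq_sum_Ico_succ_bot (Nat.succ_pos _), zero_add]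
    rfl
  refine hIcc ▸ ⟨t * (4 * t + 1), Nat.eq_of_mul_eq_mul_right two_pos ?_⟩
  rw [sum_range_id_mul_two, Nat.add_sub_cancel]
  ring

theorem stmt_6_general (t : ℕ) (g : ℕ → Finset ℕ) (I : Finset ℕ)
    (hdisj : ∀ i < 2 * t, ∀ j < 2 * t, i ≠ j → Disjoint (g i) (g j))
    (hunion : (Finset.range (2 * t)).biUnion g = Finset.Icc 1 (4 * t))
    (hIrange : ∀ i ∈ I, 1 ≤ i ∧ i < 4 * t)
    (hIdist : ∀ i ∈ I, ∀ j ∈ I, i ≠ j → i + 1 ≠ j ∧ j + 1 ≠ i) :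
    Even (∑ i ∈ Finset.range t,
      |(((g (2 * i)).image (swapFun I)).sum (fun x => (x : ℤ)) -
        ((g (2 * i + 1)).image (swapFun I)).sum (fun x => (x : ℤ)))|) := by
  rw [even_sum_abs_sub_iff (fun j => ∑ x ∈ (g j).image (swapFun I), (x : ℤ))]
  have hpd : Set.PairwiseDisjoint ↑(range (2 * t)) g := fun i hi j hj hij =>
    hdisj i (mem_range.mp hi) j (mem_range.mp hj) hij
  have htotal : ∑ j ∈ range (2 * t), ∑ x ∈ (g j).image (swapFun I), (x : ℤ)
      = ((∑ x ∈ Icc 1 (4 * t), x : ℕ) : ℤ) := by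
    calc ∑ j ∈ range (2 * t), ∑ x ∈ (g j).image (swapFun I), (x : ℤ)
        = ∑ j ∈ range (2 * t), ∑ x ∈ g j, (swapFun I x : ℤ) := by
          refine sum_congr rfl fun j _ => sum_image fun a _ b _ h => ?_
          exact (swapFun_involutive hIdist).injective h
      _ = ∑ x ∈ Icc 1 (4 * t), (swapFun I x : ℤ) := by rw [← hunion, sum_biUnion hpd]
      _ = ((∑ x ∈ Icc 1 (4 * t), x : ℕ) : ℤ) := by
          rw [sum_Icc_comp_swapFun hIrange hIdist (fun x => (x : ℤ)), Nat.cast_sum]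
  rw [htotal]
  exact (even_sum_Icc_one_four_mul t).natCast

theorem stmt_6 (t : ℕ) (g : ℕ → Finset ℕ) (I : Finset ℕ) (ht : 0 < t)
    (hcard : ∀ i < 2 * t, (g i).card = 2)
    (hdisj : ∀ i < 2 * t, ∀ j < 2 * t, i ≠ j → Disjoint (g i) (g j))
    (hunion : (Finset.range (2 * t)).biUnion g = Finset.Icc 1 (4 * t))
    (hbal : ∀ i < t, (g (2 * i)).sum id = (g (2 * i + 1)).sum id)
    (hIrange : ∀ i ∈ I, 1 ≤ i ∧ i < 4 * t)
    (hIdist : ∀ i ∈ I, ∀ j ∈ I, i ≠ j → i + 1 ≠ j ∧ j + 1 ≠ i) :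
    Even (∑ i ∈ Finset.range t,
      |(((g (2 * i)).image (swapFun I)).sum (fun x => (x : ℤ)) -
        ((g (2 * i + 1)).image (swapFun I)).sum (fun x => (x : ℤ)))|) :=
  stmt_6_general t g I hdisj hunion hIrange hIdist
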